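/- For every q-ary DMC W (q = 2^r), the maximal Bhattacharyya parameter over the top ordered-weight class satisfies Z_max^{(r)}(W⁻) ≤ q · Z_max^{(r)}(W). -/

import Mathlib

open Finset

instance (r : ℕ) : NeZero (2 ^ r) := ⟨pow_ne_zero r two_ne_zero⟩

/-- The Bhattacharyya parameter `Z(W; x, x') = ∑_y √(W x y · W x' y)` of a pair of inputs. -/
noncomputable def bhat {q : ℕ} {Y : Type*} [Fintype Y] (W : ZMod q → Y → ℝ) (x x' : ZMod q) : ℝ :=
  ∑ y, Real.sqrt (W x y * W x' y)

/-- `Z_v(W) = (1/q) ∑_x Z(W; x, x+v)`. -/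
noncomputable def Zv {q : ℕ} [NeZero q] {Y : Type*} [Fintype Y] (W : ZMod q → Y → ℝ) (v : ZMod q) : ℝ :=
  (1 / (q : ℝ)) * ∑ x, bhat W x (x + v)

/-- `W` is a discrete memoryless channel: nonnegative entries and rows summing to one. -/
def IsDMC {q : ℕ} {Y : Type*} [Fintype Y] (W : ZMod q → Y → ℝ) : Prop :=
  (∀ x y, 0 ≤ W x y) ∧ ∀ x, ∑ y, W x y = 1

/-- The ordered weight `wt(v) = r - ν₂(v̄)` of `v : ZMod (2^r)`. -/
def owt (r : ℕ) {q : ℕ} (v : ZMod q) : ℕ := r - padicValNat 2 v.val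

/-- The `i`-th average Bhattacharyya distance `Z_i(W) = 2^{-(i-1)} ∑_{v ∈ X_i} Z_v(W)`. -/
noncomputable def Zi (r : ℕ) {Y : Type*} [Fintype Y] (W : ZMod (2 ^ r) → Y → ℝ) (i : ℕ) : ℝ :=
  (1 / 2 ^ (i - 1) : ℝ) *
    ∑ v ∈ univ.filter (fun v : ZMod (2 ^ r) => v ≠ 0 ∧ owt r v = i), Zv W v

/-- The symmetric capacity `I(W)` (with `0 log 0 = 0`). -/
noncomputable def symCap {q : ℕ} [NeZero q] {Y : Type*} [Fintype Y] (W : ZMod q → Y → ℝ) : ℝ :=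
  ∑ x, ∑ y, (1 / (q : ℝ)) * W x y *
    Real.logb 2 (W x y / ∑ x', (1 / (q : ℝ)) * W x' y)

/-- `Z_max^{(j)}(W) = max_{v ∈ X_j} Z_v(W)` (as a supremum over the finite nonempty class `X_j`). -/
noncomputable def Zmax (r : ℕ) {Y : Type*} [Fintype Y] (W : ZMod (2 ^ r) → Y → ℝ) (j : ℕ) : ℝ :=
  ⨆ v : {v : ZMod (2 ^ r) // v ≠ 0 ∧ owt r v = j}, Zv W v.1

/-- The Arıkan minus transform `W⁻ u₁ (y₁,y₂) = (1/q) ∑_{u₂} W (u₁+u₂) y₁ · W u₂ y₂`. -/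
noncomputable def Wminus {q : ℕ} [NeZero q] {Y : Type*} [Fintype Y] (W : ZMod q → Y → ℝ) :
    ZMod q → Y × Y → ℝ :=
  fun u₁ p => (1 / (q : ℝ)) * ∑ u₂, W (u₁ + u₂) p.1 * W u₂ p.2

/-- The Arıkan plus transform `W⁺ u₂ (y₁,y₂,u₁) = (1/q) W (u₁+u₂) y₁ · W u₂ y₂`. -/
noncomputable def Wplus {q : ℕ} [NeZero q] {Y : Type*} [Fintype Y] (W : ZMod q → Y → ℝ) :
    ZMod q → Y × Y × ZMod q → ℝ :=
  fun u₂ p => (1 / (q : ℝ)) * W (p.2.2 + u₂) p.1 * W u₂ p.2.1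

/-- The restricted channel `W^{[r-k]}` for the `r-k` least significant bits. -/
noncomputable def Wres (r k : ℕ) {Y : Type*} [Fintype Y] (W : ZMod (2 ^ r) → Y → ℝ) :
    ZMod (2 ^ (r - k)) → Y → ℝ :=
  fun u y => (1 / 2 ^ k : ℝ) *
    ∑ x ∈ univ.filter (fun x : ZMod (2 ^ r) => x.val % 2 ^ (r - k) = u.val), W x y

/-!
Expanding `W⁻` and using subadditivity of `√` gives the convolution bound
`Z_v(W⁻) ≤ ∑_e Z_e(W) · Z_{v+e}(W)`. The top class `X_r` consists of the odd residues, so for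
`v ∈ X_r` one of `e`, `v + e` lies in `X_r` for every `e`; as all `Z_e(W) ≤ 1`, each of the `q`
terms is at most `Z_max^{(r)}(W)`.
-/

namespace Real

lemma sqrt_sum_le_sum_sqrt {ι : Type*} (s : Finset ι) {f : ι → ℝ} (hf : ∀ i ∈ s, 0 ≤ f i) :
    √(∑ i ∈ s, f i) ≤ ∑ i ∈ s, √(f i) := by
  refine (sqrt_le_left (sum_nonneg fun i _ => sqrt_nonneg (f i))).2 ?_
  calc ∑ i ∈ s, f i = ∑ i ∈ s, √(f i) ^ 2 := sum_congr rfl fun i hi => (sq_sqrt (hf i hi)).symm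
    _ ≤ (∑ i ∈ s, √(f i)) ^ 2 := sum_sq_le_sq_sum_of_nonneg fun i _ => sqrt_nonneg (f i)

lemma sqrt_sum_mul_sum_le {ι κ : Type*} (s : Finset ι) (t : Finset κ) {f : ι → ℝ} {g : κ → ℝ}
    (hf : ∀ i, 0 ≤ f i) (hg : ∀ j, 0 ≤ g j) :
    √((∑ i ∈ s, f i) * ∑ j ∈ t, g j) ≤ ∑ i ∈ s, ∑ j ∈ t, √(f i * g j) := by
  rw [sum_mul_sum]
  exact (sqrt_sum_le_sum_sqrt s fun i _ => sum_nonneg fun j _ => mul_nonneg (hf i) (hg j)).trans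
    (sum_le_sum fun i _ => sqrt_sum_le_sum_sqrt t fun j _ => mul_nonneg (hf i) (hg j))

end Real

section Bhattacharyya

variable {q : ℕ} {Y : Type*} [Fintype Y]

lemma bhat_nonneg (W : ZMod q → Y → ℝ) (x x' : ZMod q) : 0 ≤ bhat W x x' :=
  sum_nonneg fun _ _ => Real.sqrt_nonneg _

lemma bhat_le_one {W : ZMod q → Y → ℝ} (hW : IsDMC W) (x x' : ZMod q) : bhat W x x' ≤ 1 := by
  calc bhat W x x' = ∑ y, √(W x y) * √(W x' y) :=
        sum_congr rfl fun y _ => Real.sqrt_mul (hW.1 x y) _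
    _ ≤ √(∑ y, W x y) * √(∑ y, W x' y) := Real.sum_sqrt_mul_sqrt_le _ (hW.1 x) (hW.1 x')
    _ = 1 := by rw [hW.2 x, hW.2 x', Real.sqrt_one, one_mul]

variable [NeZero q]

lemma sum_bhat_add_eq (W : ZMod q → Y → ℝ) (d : ZMod q) :
    ∑ x, bhat W x (x + d) = q * Zv W d := by
  rw [Zv, ← mul_assoc, mul_one_div_cancel (Nat.cast_ne_zero.2 (NeZero.ne q)), one_mul]

lemma Zv_nonneg (W : ZMod q → Y → ℝ) (v : ZMod q) : 0 ≤ Zv W v :=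
  mul_nonneg (by positivity) (sum_nonneg fun x _ => bhat_nonneg W x _)

lemma Zv_le_one {W : ZMod q → Y → ℝ} (hW : IsDMC W) (v : ZMod q) : Zv W v ≤ 1 := by
  have hq : (0 : ℝ) < q := Nat.cast_pos.2 (NeZero.pos q)
  calc Zv W v ≤ (1 / (q : ℝ)) * ∑ _x : ZMod q, (1 : ℝ) :=
        mul_le_mul_of_nonneg_left (sum_le_sum fun x _ => bhat_le_one hW x _) (by positivity)
    _ = 1 := by rw [sum_const, card_univ, ZMod.card, nsmul_one, one_div_mul_cancel hq.ne']

/-- Expand `W⁻ a p · W⁻ b p` as a double sum and use subadditivity of `√`. -/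
lemma bhat_Wminus_le {W : ZMod q → Y → ℝ} (hW : ∀ x y, 0 ≤ W x y) (a b : ZMod q) :
    bhat (Wminus W) a b ≤
      (1 / (q : ℝ)) * ∑ u, ∑ u', bhat W (a + u) (b + u') * bhat W u u' := by
  have hpoint : ∀ p : Y × Y, √(Wminus W a p * Wminus W b p) ≤ (1 / (q : ℝ)) *
      ∑ u, ∑ u', √(W (a + u) p.1 * W (b + u') p.1) * √(W u p.2 * W u' p.2) := by
    intro p
    have hsplit : Wminus W a p * Wminus W b p = (1 / (q : ℝ)) ^ 2 *
        ((∑ u, W (a + u) p.1 * W u p.2) * ∑ u', W (b + u') p.1 * W u' p.2) := by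
      simp only [Wminus]; ring
    rw [hsplit, Real.sqrt_mul (by positivity), Real.sqrt_sq (by positivity)]
    refine mul_le_mul_of_nonneg_left ((Real.sqrt_sum_mul_sum_le _ _
      (fun u => mul_nonneg (hW _ _) (hW _ _)) (fun u' => mul_nonneg (hW _ _) (hW _ _))).trans_eq
      (sum_congr rfl fun u _ => sum_congr rfl fun u' _ => ?_)) (by positivity)
    rw [← Real.sqrt_mul (mul_nonneg (hW _ _) (hW _ _))]
    ring_nf
  calc bhat (Wminus W) a b ≤ ∑ p : Y × Y, (1 / (q : ℝ)) *
        ∑ u, ∑ u', √(W (a + u) p.1 * W (b + u') p.1) * √(W u p.2 * W u' p.2) :=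
        sum_le_sum fun p _ => hpoint p
    _ = _ := by
        rw [← mul_sum, sum_comm]
        refine congrArg _ (sum_congr rfl fun u _ => ?_)
        rw [sum_comm]
        refine sum_congr rfl fun u' _ => ?_
        rw [bhat, bhat, sum_mul_sum, Fintype.sum_prod_type]

/-- Substituting `u' = u + e` and summing over `a` turns the pairwise bound into a convolution. -/
lemma Zv_Wminus_le {W : ZMod q → Y → ℝ} (hW : ∀ x y, 0 ≤ W x y) (v : ZMod q) :
    Zv (Wminus W) v ≤ ∑ e, Zv W e * Zv W (v + e) := by
  have hq : (q : ℝ) ≠ 0 := Nat.cast_ne_zero.2 (NeZero.ne q)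
  have hreindex : ∑ a, ∑ u, ∑ u', bhat W (a + u) (a + v + u') * bhat W u u' =
      ∑ e, (∑ u, bhat W u (u + e)) * ∑ x, bhat W x (x + (v + e)) := by
    have hshift : ∀ u e, ∑ a, bhat W (a + u) (a + v + (u + e)) = ∑ x, bhat W x (x + (v + e)) :=
      fun u e => by
        rw [← Equiv.sum_comp (Equiv.addRight u) fun x => bhat W x (x + (v + e))]
        exact sum_congr rfl fun a _ => by simp only [Equiv.coe_addRight, add_assoc, add_left_comm]
    calc ∑ a, ∑ u, ∑ u', bhat W (a + u) (a + v + u') * bhat W u u'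
        = ∑ u, ∑ e, bhat W u (u + e) * ∑ a, bhat W (a + u) (a + v + (u + e)) := by
          rw [sum_comm]
          refine sum_congr rfl fun u _ => ?_
          rw [sum_comm, ← Equiv.sum_comp (Equiv.addLeft u)
            fun u' => ∑ a, bhat W (a + u) (a + v + u') * bhat W u u']
          simp only [Equiv.coe_addLeft, mul_sum, mul_comm]
      _ = _ := by
          simp only [hshift]
          rw [sum_comm]
          simp only [← sum_mul]
  calc Zv (Wminus W) v ≤ (1 / (q : ℝ)) * ∑ a, (1 / (q : ℝ)) *
        ∑ u, ∑ u', bhat W (a + u) (a + v + u') * bhat W u u' :=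
        mul_le_mul_of_nonneg_left (sum_le_sum fun a _ => bhat_Wminus_le hW a (a + v))
          (by positivity)
    _ = ∑ e, Zv W e * Zv W (v + e) := by
        simp only [← mul_sum, hreindex, sum_bhat_add_eq]
        rw [mul_sum, mul_sum]
        exact sum_congr rfl fun e _ => by field_simp

end Bhattacharyya

section TopWeightClass

variable {r : ℕ}

lemma ne_zero_of_val_ne_zero {v : ZMod (2 ^ r)} (hv : v.val ≠ 0) : r ≠ 0 := by
  rintro rfl
  exact hv (Nat.lt_one_iff.1 (ZMod.val_lt v))

lemma ne_zero_and_owt_eq_iff_odd (v : ZMod (2 ^ r)) : v ≠ 0 ∧ owt r v = r ↔ Odd v.val := by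
  constructor
  · rintro ⟨hv0, hwt⟩
    have hval : v.val ≠ 0 := (ZMod.val_ne_zero v).2 hv0
    have hr := ne_zero_of_val_ne_zero hval
    refine Nat.not_even_iff_odd.1 fun heven => ?_
    have hν := one_le_padicValNat_of_dvd hval heven.two_dvd
    unfold owt at hwt
    omega
  · intro hv
    refine ⟨fun h0 => ?_, ?_⟩
    · rw [h0, ZMod.val_zero] at hv
      exact Nat.not_odd_zero hv
    · rw [owt, padicValNat.eq_zero_of_not_dvd hv.not_two_dvd_nat, Nat.sub_zero]

lemma odd_val_or_odd_val_add {v : ZMod (2 ^ r)} (hv : Odd v.val) (e : ZMod (2 ^ r)) :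
    Odd e.val ∨ Odd (v + e).val := by
  have h2 : 2 ∣ 2 ^ r := dvd_pow_self 2 (ne_zero_of_val_ne_zero hv.pos.ne')
  rw [ZMod.val_add, Nat.odd_iff, Nat.odd_iff, Nat.mod_mod_of_dvd _ h2]
  rw [Nat.odd_iff] at hv
  omega

variable {Y : Type*} [Fintype Y] (W : ZMod (2 ^ r) → Y → ℝ)

lemma Zv_le_Zmax {j : ℕ} {v : ZMod (2 ^ r)} (hv : v ≠ 0 ∧ owt r v = j) : Zv W v ≤ Zmax r W j :=
  le_ciSup (f := fun v : {v : ZMod (2 ^ r) // v ≠ 0 ∧ owt r v = j} => Zv W v.1)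
    (Set.finite_range _).bddAbove ⟨v, hv⟩

lemma Zmax_nonneg (j : ℕ) : 0 ≤ Zmax r W j :=
  Real.iSup_nonneg fun v => Zv_nonneg W v.1

end TopWeightClass

theorem Zmax_minus_top_general (r : ℕ) {Y : Type*} [Fintype Y]
    (W : ZMod (2 ^ r) → Y → ℝ) (hW : IsDMC W) :
    Zmax r (Wminus W) r ≤ (2 ^ r : ℝ) * Zmax r W r := by
  refine Real.iSup_le (fun ⟨v, hv⟩ => ?_) (mul_nonneg (by positivity) (Zmax_nonneg W r))
  have hv_odd := (ne_zero_and_owt_eq_iff_odd v).1 hv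
  have hterm : ∀ e, Zv W e * Zv W (v + e) ≤ Zmax r W r := fun e => by
    rcases odd_val_or_odd_val_add hv_odd e with he | he
    · exact (mul_le_of_le_one_right (Zv_nonneg W e) (Zv_le_one hW _)).trans
        (Zv_le_Zmax W ((ne_zero_and_owt_eq_iff_odd e).2 he))
    · exact (mul_le_of_le_one_left (Zv_nonneg W _) (Zv_le_one hW e)).trans
        (Zv_le_Zmax W ((ne_zero_and_owt_eq_iff_odd _).2 he))
  calc Zv (Wminus W) v ≤ ∑ e, Zv W e * Zv W (v + e) := Zv_Wminus_le hW.1 v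
    _ ≤ ∑ _e : ZMod (2 ^ r), Zmax r W r := sum_le_sum fun e _ => hterm e
    _ = (2 ^ r : ℝ) * Zmax r W r := by simp [ZMod.card]

/-- `Z_max^{(r)}(W⁻) ≤ q · Z_max^{(r)}(W)`. -/
theorem Zmax_minus_top (r : ℕ) (hr : 1 ≤ r) {Y : Type*} [Fintype Y] [Nonempty Y]
    (W : ZMod (2 ^ r) → Y → ℝ) (hW : IsDMC W) :
    Zmax r (Wminus W) r ≤ (2 ^ r : ℝ) * Zmax r W r :=
  Zmax_minus_top_general r W hW
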